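/- arXiv:2509.10030 — 7 statements merged into one kernel-verified Lean document; each statement's English description precedes it below -/
import Mathlib

section
/- Let N be a positive integer. Then |E_N| = 2|E_{N-1}| if and only if there is no choice of w_1,…,w_{N-1} ∈ {-1,0,1} with ∑_{n=1}^{N-1} w_n/n = 1/N. -/
/-- `E N`: the set of Egyptian fractions with denominators at most `N`,
i.e. all sums `∑_{n=1}^N t_n / n` with `t_n ∈ {0,1}`. -/
def egyptianSet (N : ℕ) : Finset ℚ :=
  (Finset.Icc 1 N).powerset.image (fun (S : Finset ℕ) => ∑ n ∈ S, (1 : ℚ) / (n : ℚ))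

/-!
`E_N = E_{N-1} ∪ (E_{N-1} + 1/N)` and translation is injective, so `|E_N| = 2|E_{N-1}|` exactly
when these two sets are disjoint, i.e. when `1/N` is not a difference `a - b` of elements of
`E_{N-1}`. Writing `a`, `b` as subset sums over `S`, `T`, such differences are exactly the signed
sums `∑ w_n/n` with `w = 𝟙_S - 𝟙_T`; conversely `S = {w = 1}` and `T = {w = -1}`.
-/

open Finset

namespace Finset

variable {α β : Type*}

theorem card_union_image_eq_two_mul_iff [DecidableEq β] {f : β → β} (hf : Function.Injective f)
    (s : Finset β) :
    #(s ∪ s.image f) = 2 * #s ↔ Disjoint s (s.image f) := by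
  rw [← card_union_eq_card_add_card, card_image_of_injective s hf, two_mul]

theorem disjoint_image_add_right_iff [DecidableEq β] [AddCommGroup β] (s : Finset β) (c : β) :
    Disjoint s (s.image (· + c)) ↔ ∀ a ∈ s, ∀ b ∈ s, a - b ≠ c := by
  simp only [disjoint_left, mem_image, not_exists, not_and, ne_eq, sub_eq_iff_eq_add']
  exact ⟨fun h a ha b hb hab => h ha b hb hab.symm, fun h a ha b hb hab => h a ha b hb hab.symm⟩

theorem image_sum_powerset_insert [DecidableEq α] [DecidableEq β] [AddCommMonoid β] {a : α}
    {I : Finset α} (ha : a ∉ I) (g : α → β) :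
    (insert a I).powerset.image (fun S => ∑ i ∈ S, g i) =
      I.powerset.image (fun S => ∑ i ∈ S, g i) ∪
        (I.powerset.image (fun S => ∑ i ∈ S, g i)).image (· + g a) := by
  rw [powerset_insert, image_union, image_image, image_image]
  congr 1
  refine image_congr fun S hS => ?_
  have haS : a ∉ S := fun h => ha (mem_powerset.mp hS h)
  simp only [Function.comp_apply, sum_insert haS, add_comm]

theorem exists_sub_sum_subsets_iff_exists_signed_sum [DecidableEq α] [CommRing β]
    (I : Finset α) (g : α → β) (c : β) :
    (∃ S ⊆ I, ∃ T ⊆ I, ∑ i ∈ S, g i - ∑ i ∈ T, g i = c) ↔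
      ∃ w : α → ℤ, (∀ i, w i = -1 ∨ w i = 0 ∨ w i = 1) ∧ ∑ i ∈ I, (w i : β) * g i = c := by
  constructor
  · rintro ⟨S, hS, T, hT, rfl⟩
    refine ⟨fun i => (if i ∈ S then 1 else 0) - (if i ∈ T then 1 else 0), fun i => ?_, ?_⟩
    · by_cases hiS : i ∈ S <;> by_cases hiT : i ∈ T <;> simp [hiS, hiT]
    · have sum_ite_of_subset (U : Finset α) (hU : U ⊆ I) :
          ∑ i ∈ I, (if i ∈ U then g i else 0) = ∑ i ∈ U, g i := by
        rw [sum_ite_mem, inter_eq_right.mpr hU]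
      rw [← sum_ite_of_subset S hS, ← sum_ite_of_subset T hT, ← sum_sub_distrib]
      refine sum_congr rfl fun i _ => ?_
      by_cases hiS : i ∈ S <;> by_cases hiT : i ∈ T <;> simp [hiS, hiT]
  · rintro ⟨w, hw, rfl⟩
    refine ⟨I.filter (w · = 1), filter_subset _ _, I.filter (w · = -1), filter_subset _ _, ?_⟩
    rw [sum_filter, sum_filter, ← sum_sub_distrib]
    refine sum_congr rfl fun i _ => ?_
    rcases hw i with h | h | h <;> simp [h]

end Finset

theorem egyptianSet_succ (M : ℕ) :
    egyptianSet (M + 1) =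
      egyptianSet M ∪ (egyptianSet M).image (· + 1 / ((M + 1 : ℕ) : ℚ)) := by
  rw [egyptianSet, egyptianSet, ← insert_Icc_right_eq_Icc_add_one (by omega)]
  exact image_sum_powerset_insert (by simp) _

theorem card_egyptianSet_doubles_iff (N : ℕ) (hN : 1 ≤ N) :
    (egyptianSet N).card = 2 * (egyptianSet (N - 1)).card ↔
      ∀ w : ℕ → ℤ, (∀ n, w n = -1 ∨ w n = 0 ∨ w n = 1) →
        ∑ n ∈ Finset.Icc 1 (N - 1), (w n : ℚ) / (n : ℚ) ≠ 1 / (N : ℚ) := by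
  obtain ⟨M, rfl⟩ : ∃ M, N = M + 1 := ⟨N - 1, by omega⟩
  rw [Nat.add_sub_cancel, egyptianSet_succ,
    card_union_image_eq_two_mul_iff (add_left_injective _), disjoint_image_add_right_iff]
  have hsigned := exists_sub_sum_subsets_iff_exists_signed_sum (Icc 1 M)
    (fun n : ℕ => 1 / (n : ℚ)) (1 / ((M + 1 : ℕ) : ℚ))
  simpa [egyptianSet, div_eq_mul_inv] using not_congr hsigned
end

section
/- For every positive integer N, |E_N| ≥ 2^{|𝒰 ∩ [1,N]|}, where 𝒰 is the set of positive integers m such that 1/m cannot be written as ∑_{n=1}^{m-1} w_n/n with w_n ∈ {-1,0,1}. -/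
/-- `N ∈ 𝒰` iff `N ≥ 1` and `∑_{n=1}^{N-1} w_n/n ≠ 1/N` for all `w_n ∈ {-1,0,1}`. -/
def memU (N : ℕ) : Prop :=
  1 ≤ N ∧ ∀ w : ℕ → ℤ, (∀ n, w n = -1 ∨ w n = 0 ∨ w n = 1) →
    ∑ n ∈ Finset.Icc 1 (N - 1), (w n : ℚ) / (n : ℚ) ≠ 1 / (N : ℚ)

/-!
If two distinct sets `S, T ⊆ 𝒰` had the same sum of reciprocals, let `m` be the largest element
of `S ∆ T`, say `m ∈ S \ T`. Cancelling the common part above `m` leaves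
`1/m = ∑_{n<m} ([n ∈ T] - [n ∈ S]) / n`, a signed sum with coefficients in `{-1, 0, 1}`,
which `m ∈ 𝒰` forbids. Hence `S ↦ ∑_{n ∈ S} 1/n` is injective on the subsets of
`𝒰 ∩ [1, N]`, and all `2^{|𝒰 ∩ [1, N]|}` of its values lie in `E_N`.
-/

open Finset
open scoped symmDiff

-- The possible element `0` of `A` is harmless because `1 / 0 = 0` in `ℚ`.
lemma sum_filter_lt_one_div_eq_sum_Icc (A : Finset ℕ) (m : ℕ) :
    ∑ n ∈ A.filter (· < m), (1 : ℚ) / n =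
      ∑ n ∈ Icc 1 (m - 1), if n ∈ A then (1 : ℚ) / n else 0 := by
  rw [sum_ite_mem]
  refine (sum_subset (fun n hn => ?_) fun n hn hn' => ?_).symm
  · simp only [mem_inter, mem_Icc, mem_filter] at hn ⊢
    grind
  · simp only [mem_inter, mem_Icc, mem_filter] at hn hn'
    obtain rfl : n = 0 := by grind
    simp

section

variable {S T : Finset ℕ} {m : ℕ}

lemma sum_one_div_filter_lt_sub_eq (hmS : m ∈ S) (hmT : m ∉ T)
    (hST : ∀ n, m < n → (n ∈ S ↔ n ∈ T))
    (hsum : ∑ n ∈ S, (1 : ℚ) / n = ∑ n ∈ T, (1 : ℚ) / n) :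
    ∑ n ∈ T.filter (· < m), (1 : ℚ) / n - ∑ n ∈ S.filter (· < m), (1 : ℚ) / n = 1 / m := by
  have hS : S.filter (¬ · < m) = insert m (S.filter (m < ·)) := by
    ext n
    simp only [mem_filter, mem_insert, not_lt]
    grind
  have hT : T.filter (¬ · < m) = S.filter (m < ·) := by
    ext n
    simp only [mem_filter, not_lt]
    grind
  have hm : m ∉ S.filter (m < ·) := by simp
  rw [← sum_filter_add_sum_filter_not S (· < m), hS, sum_insert hm,
    ← sum_filter_add_sum_filter_not T (· < m), hT] at hsum
  linarith

lemma not_memU_of_sum_one_div_eq (hmS : m ∈ S) (hmT : m ∉ T)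
    (hST : ∀ n, m < n → (n ∈ S ↔ n ∈ T))
    (hsum : ∑ n ∈ S, (1 : ℚ) / n = ∑ n ∈ T, (1 : ℚ) / n) : ¬ memU m := by
  rintro ⟨-, hU⟩
  refine hU (fun n => (if n ∈ T then 1 else 0) - if n ∈ S then 1 else 0)
    (fun n => by split_ifs <;> simp) ?_
  rw [← sum_one_div_filter_lt_sub_eq hmS hmT hST hsum, sum_filter_lt_one_div_eq_sum_Icc,
    sum_filter_lt_one_div_eq_sum_Icc, ← sum_sub_distrib]
  refine sum_congr rfl fun n _ => ?_
  split_ifs <;> simp [neg_div]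

end

theorem injOn_sum_one_div :
    Set.InjOn (fun S : Finset ℕ => ∑ n ∈ S, (1 : ℚ) / n) {S | ∀ m ∈ S, memU m} := by
  intro S hS T hT hsum
  by_contra hne
  have hD : (S ∆ T).Nonempty := symmDiff_nonempty.mpr hne
  have hST : ∀ n, (S ∆ T).max' hD < n → (n ∈ S ↔ n ∈ T) := fun n hn => by
    by_contra h
    exact hn.not_ge (le_max' _ n (mem_symmDiff.mpr (by tauto)))
  rcases mem_symmDiff.mp (max'_mem _ hD) with ⟨hmS, hmT⟩ | ⟨hmT, hmS⟩
  · exact not_memU_of_sum_one_div_eq hmS hmT hST hsum (hS _ hmS)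
  · exact not_memU_of_sum_one_div_eq hmT hmS (fun n hn => (hST n hn).symm) hsum.symm (hT _ hmT)

open scoped Classical in
theorem card_egyptianSet_ge_general (N : ℕ) :
    2 ^ ((Finset.Icc 1 N).filter (fun m => memU m)).card ≤ (egyptianSet N).card := by
  rw [← card_powerset]
  refine card_le_card_of_injOn (fun S => ∑ n ∈ S, (1 : ℚ) / n) (fun S hS => ?_) ?_
  · exact mem_image.mpr ⟨S, mem_powerset.mpr ((mem_powerset.mp hS).trans (filter_subset _ _)), rfl⟩
  · refine injOn_sum_one_div.mono ?_
    intro S hS m hm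
    exact (mem_filter.mp (mem_powerset.mp hS hm)).2

open scoped Classical in
theorem card_egyptianSet_ge (N : ℕ) (hN : 1 ≤ N) :
    2 ^ ((Finset.Icc 1 N).filter (fun m => memU m)).card ≤ (egyptianSet N).card :=
  card_egyptianSet_ge_general N
end

section
/- If N ∈ 𝒰 then every positive divisor of N is in 𝒰 (the set 𝒰 is closed under taking divisors). -/
/-!
If `∑_{n<d} w_n/n = 1/d` and `N = d m`, then putting the weight `w_n` on `n m` instead of `n`
divides the sum by `m`, giving `1/N` with weights in `{-1,0,1}` indexed below `N`.
-/

open Finset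

def dilateWeights (m : ℕ) (w : ℕ → ℤ) (k : ℕ) : ℤ :=
  if m ∣ k then w (k / m) else 0

theorem dilateWeights_mul {m : ℕ} (hm : 0 < m) (w : ℕ → ℤ) (n : ℕ) :
    dilateWeights m w (n * m) = w n := by
  simp [dilateWeights, Nat.mul_div_cancel n hm]

theorem dilateWeights_trichotomy {w : ℕ → ℤ} (hw : ∀ n, w n = -1 ∨ w n = 0 ∨ w n = 1)
    (m k : ℕ) : dilateWeights m w k = -1 ∨ dilateWeights m w k = 0 ∨ dilateWeights m w k = 1 := by
  unfold dilateWeights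
  split_ifs
  · exact hw _
  · simp

theorem mul_mem_Icc_one_sub_one {m n d : ℕ} (hm : 0 < m) (hn : n ∈ Icc 1 (d - 1)) :
    n * m ∈ Icc 1 (d * m - 1) := by
  rw [mem_Icc] at hn ⊢
  refine ⟨Nat.one_le_iff_ne_zero.2 (Nat.mul_ne_zero (by omega) hm.ne'), ?_⟩
  calc n * m ≤ (d - 1) * m := Nat.mul_le_mul_right m hn.2
    _ = d * m - m := by rw [Nat.sub_mul, one_mul]
    _ ≤ d * m - 1 := Nat.sub_le_sub_left hm _

theorem sum_Icc_dilateWeights_div {K : Type*} [Field K] (w : ℕ → ℤ) {m : ℕ} (hm : 0 < m)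
    (d : ℕ) :
    ∑ k ∈ Icc 1 (d * m - 1), (dilateWeights m w k : K) / k
      = (∑ n ∈ Icc 1 (d - 1), (w n : K) / n) / m := by
  have hterm : ∀ n, (w n : K) / n / m = (dilateWeights m w (n * m) : K) / ↑(n * m) := by
    intro n
    rw [dilateWeights_mul hm, Nat.cast_mul, div_div]
  rw [sum_div]
  symm
  refine sum_bij_ne_zero (fun n _ _ => n * m) (fun n hn _ => mul_mem_Icc_one_sub_one hm hn)
    (fun a _ _ b _ _ hab => Nat.eq_of_mul_eq_mul_right hm hab) ?_ (fun n _ _ => hterm n)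
  intro k hk hk0
  have hmk : m ∣ k := by
    by_contra h
    simp [dilateWeights, h] at hk0
  obtain ⟨c, rfl⟩ := hmk
  rw [mul_comm m c] at hk hk0 ⊢
  rw [mem_Icc] at hk
  have hc : c < d := Nat.lt_of_mul_lt_mul_right (a := m) (by omega)
  exact ⟨c, mem_Icc.2 ⟨Nat.pos_of_mul_pos_right hk.1, by omega⟩, hterm c ▸ hk0, rfl⟩

theorem memU_of_dvd_general (N d : ℕ) (hN : memU N) (hd : d ∣ N) : memU d := by
  obtain ⟨m, rfl⟩ := hd
  obtain ⟨hdm, hN⟩ := hN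
  have hd : 0 < d := Nat.pos_of_mul_pos_right hdm
  have hm : 0 < m := Nat.pos_of_mul_pos_left hdm
  refine ⟨hd, fun w hw hsum => hN (dilateWeights m w) (dilateWeights_trichotomy hw m) ?_⟩
  rw [sum_Icc_dilateWeights_div w hm, hsum]
  push_cast
  rw [div_div]

theorem memU_of_dvd (N d : ℕ) (hN : memU N) (hd : d ∣ N) (hd0 : 0 < d) : memU d :=
  memU_of_dvd_general N d hN hd
end

section
/- If m ∈ 𝒰 and p is a prime compatible with m, then m p^k ∈ 𝒰 for every positive integer k. -/
/-- A prime `p` is *compatible* with `m` if every rational of the form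
`1/m - ∑_{j=1}^{m-1} w_j/j` with `w_j ∈ {-1,0,1}` is nonzero and has numerator
not divisible by `p`. -/
def Compatible (p m : ℕ) : Prop :=
  ∀ w : ℕ → ℤ, (∀ n, w n = -1 ∨ w n = 0 ∨ w n = 1) →
    (1 / (m : ℚ) - ∑ j ∈ Finset.Icc 1 (m - 1), (w j : ℚ) / (j : ℚ)) ≠ 0 ∧
    ¬ (p : ℤ) ∣ (1 / (m : ℚ) - ∑ j ∈ Finset.Icc 1 (m - 1), (w j : ℚ) / (j : ℚ)).num

/-!
Suppose `∑_{n < N} w_n/n = 1/N` with `N = m q`, `q = p^k`. The terms with `q ∣ n` contribute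
`S/q`, where `S = ∑_{j < m} w_{qj}/j`, so `1/m - S = ∑_{q ∤ n} w_n q/n`. Compatibility makes
the left side a `p`-adic unit, while every term on the right has `p`-adic norm `< 1`, because
`p^k ∤ n` means `v_p(n) < k`.
-/

open Finset

theorem Compatible.one_le {p m : ℕ} (h : Compatible p m) : 1 ≤ m := by
  refine Nat.one_le_iff_ne_zero.2 fun hm => ?_
  subst hm
  -- `1 / 0 = 0` in `ℚ` and the sum is empty, so the expression vanishes.
  exact (h 0 fun _ => Or.inr (Or.inl rfl)).1 (by simp)

theorem filter_dvd_Icc_mul_eq_image {q : ℕ} (hq : 0 < q) (m : ℕ) :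
    (Icc 1 (m * q - 1)).filter (q ∣ ·) = (Icc 1 (m - 1)).image (q * ·) := by
  ext n
  simp only [mem_filter, mem_Icc, mem_image]
  constructor
  · rintro ⟨⟨hn1, hnN⟩, j, rfl⟩
    refine ⟨j, ⟨Nat.pos_of_mul_pos_left hn1, ?_⟩, rfl⟩
    have : q * j < q * m := by rw [mul_comm q m]; omega
    have := Nat.lt_of_mul_lt_mul_left this
    omega
  · rintro ⟨j, ⟨hj1, hjm⟩, rfl⟩
    refine ⟨⟨Nat.mul_pos hq hj1, ?_⟩, dvd_mul_right q j⟩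
    have : q * (j + 1) ≤ q * m := Nat.mul_le_mul_left q (by omega)
    rw [mul_add, mul_one] at this
    rw [mul_comm m q]
    omega

theorem sum_Icc_mul_eq_sum_mul_add_sum_not_dvd {M : Type*} [AddCommMonoid M] {q : ℕ}
    (hq : 0 < q) (m : ℕ) (f : ℕ → M) :
    ∑ n ∈ Icc 1 (m * q - 1), f n =
      ∑ j ∈ Icc 1 (m - 1), f (q * j) + ∑ n ∈ (Icc 1 (m * q - 1)).filter (¬ q ∣ ·), f n := by
  rw [← sum_filter_add_sum_filter_not _ (q ∣ ·), filter_dvd_Icc_mul_eq_image hq,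
    sum_image fun _ _ _ _ h => Nat.eq_of_mul_eq_mul_left hq h]

theorem one_div_sub_sum_eq_sum_not_dvd (w : ℕ → ℤ) {m q : ℕ} (hq : 0 < q)
    (h : ∑ n ∈ Icc 1 (m * q - 1), (w n : ℚ) / n = 1 / ((m * q : ℕ) : ℚ)) :
    1 / (m : ℚ) - ∑ j ∈ Icc 1 (m - 1), (w (q * j) : ℚ) / j =
      ∑ n ∈ (Icc 1 (m * q - 1)).filter (¬ q ∣ ·), (w n : ℚ) * ((q : ℚ) / n) := by
  have hq' : (q : ℚ) ≠ 0 := by positivity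
  rw [sum_Icc_mul_eq_sum_mul_add_sum_not_dvd hq] at h
  have hdiv : ∑ j ∈ Icc 1 (m - 1), (w (q * j) : ℚ) / ((q * j : ℕ) : ℚ) =
      (∑ j ∈ Icc 1 (m - 1), (w (q * j) : ℚ) / j) / q := by
    rw [sum_div]
    refine sum_congr rfl fun j _ => ?_
    rw [Nat.cast_mul, div_div, mul_comm (j : ℚ)]
  have hfactor : ∑ n ∈ (Icc 1 (m * q - 1)).filter (¬ q ∣ ·), (w n : ℚ) * ((q : ℚ) / n) =
      q * ∑ n ∈ (Icc 1 (m * q - 1)).filter (¬ q ∣ ·), (w n : ℚ) / n := by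
    rw [mul_sum]
    exact sum_congr rfl fun n _ => by ring
  rw [hfactor]
  rw [hdiv, Nat.cast_mul] at h
  field_simp at h
  linear_combination -h

section Padic

variable {p : ℕ} [Fact p.Prime]

theorem one_le_padicNorm_of_not_dvd_num {x : ℚ} (h : ¬ (p : ℤ) ∣ x.num) : 1 ≤ padicNorm p x := by
  have hx : x ≠ 0 := by rintro rfl; exact h (dvd_zero _)
  have hv : padicValRat p x ≤ 0 := by
    rw [padicValRat, padicValInt.eq_zero_of_not_dvd h]
    simp
  rw [padicNorm.eq_zpow_of_nonzero hx]
  exact one_le_zpow₀ (by exact_mod_cast (Fact.out : p.Prime).one_le) (by omega)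

theorem padicNorm_pow_div_lt_one {k n : ℕ} (hn : n ≠ 0) (h : ¬ p ^ k ∣ n) :
    padicNorm p ((p : ℚ) ^ k / n) < 1 := by
  have hp : (1 : ℚ) < p := by exact_mod_cast (Fact.out : p.Prime).one_lt
  have hvn : padicValNat p n < k := by
    rw [padicValNat_dvd_iff_le hn] at h
    omega
  have hv : padicValRat p ((p : ℚ) ^ k / n) = k - padicValNat p n := by
    rw [padicValRat.div (by positivity) (by exact_mod_cast hn), padicValRat.pow,
      padicValRat.self (Fact.out : p.Prime).one_lt, padicValRat.of_nat, mul_one]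
  rw [padicNorm.eq_zpow_of_nonzero (by positivity), hv]
  exact zpow_lt_one_of_neg₀ hp (by omega)

theorem padicNorm_sum_int_mul_pow_div_lt_one {k : ℕ} (s : Finset ℕ) (a : ℕ → ℤ)
    (hs : ∀ n ∈ s, n ≠ 0 ∧ ¬ p ^ k ∣ n) :
    padicNorm p (∑ n ∈ s, (a n : ℚ) * ((p : ℚ) ^ k / n)) < 1 := by
  refine padicNorm.sum_lt' (fun n hn => ?_) one_pos
  rw [padicNorm.mul]
  exact mul_lt_one_of_nonneg_of_lt_one_right (padicNorm.of_int _) (padicNorm.nonneg _)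
    (padicNorm_pow_div_lt_one (hs n hn).1 (hs n hn).2)

end Padic

theorem memU_mul_prime_pow_general (m p k : ℕ) (hp : p.Prime)
    (hcomp : Compatible p m) : memU (m * p ^ k) := by
  have : Fact p.Prime := ⟨hp⟩
  have hq : 0 < p ^ k := pow_pos hp.pos k
  refine ⟨Nat.mul_pos hcomp.one_le hq, fun w hw hsum => ?_⟩
  have hunit := one_le_padicNorm_of_not_dvd_num (hcomp _ fun j => hw (p ^ k * j)).2
  rw [one_div_sub_sum_eq_sum_not_dvd w hq hsum, Nat.cast_pow] at hunit
  refine (padicNorm_sum_int_mul_pow_div_lt_one _ w fun n hn => ?_).not_ge hunit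
  simp only [mem_filter, mem_Icc] at hn
  exact ⟨by omega, hn.2⟩

theorem memU_mul_prime_pow (m p k : ℕ) (hm : memU m) (hp : p.Prime)
    (hcomp : Compatible p m) (hk : 1 ≤ k) : memU (m * p ^ k) :=
  memU_mul_prime_pow_general m p k hp hcomp
end

section
/- If m ∈ 𝒰 and p is a prime with p > g_m := lcm(1,…,m) · ∑_{j=1}^m 1/j, then m p^k ∈ 𝒰 for every positive integer k. -/
open Finset

lemma exists_int_mul_sum_div_eq {s : Finset ℕ} {D : ℕ} (hD : ∀ n ∈ s, n ∣ D) (c : ℕ → ℤ) :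
    ∃ y : ℤ, (D : ℚ) * ∑ n ∈ s, (c n : ℚ) / n = y := by
  refine ⟨∑ n ∈ s, c n * (D / n : ℕ), ?_⟩
  rw [mul_sum, Int.cast_sum]
  refine sum_congr rfl fun n hn => ?_
  rw [Int.cast_mul, Int.cast_natCast, Nat.cast_div_charZero (hD n hn)]
  ring

lemma abs_sum_div_le_sum_one_div {s : Finset ℕ} {c : ℕ → ℤ} (hc : ∀ n ∈ s, |c n| ≤ 1) :
    |∑ n ∈ s, (c n : ℚ) / n| ≤ ∑ n ∈ s, (1 : ℚ) / n := by
  refine (abs_sum_le_sum_abs _ _).trans (sum_le_sum fun n hn => ?_)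
  rw [abs_div, Nat.abs_cast]
  gcongr
  exact_mod_cast hc n hn

lemma dvd_prod_ordCompl_mul_pow {p k : ℕ} (hp : p.Prime) {s : Finset ℕ} {n : ℕ} (hn : n ∈ s)
    (hn0 : n ≠ 0) (hnp : ¬ p ^ (k + 1) ∣ n) : n ∣ (∏ i ∈ s, ordCompl[p] i) * p ^ k := by
  have hle : n.factorization p ≤ k := by
    by_contra! h
    exact hnp ((hp.pow_dvd_iff_le_factorization hn0).mpr h)
  calc n = ordCompl[p] n * p ^ n.factorization p := by
        rw [mul_comm, Nat.ordProj_mul_ordCompl_eq_self]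
    _ ∣ (∏ i ∈ s, ordCompl[p] i) * p ^ k :=
        mul_dvd_mul (dvd_prod_of_mem _ hn) (pow_dvd_pow p hle)

lemma exists_not_dvd_mul_pow_mul_sum_div_eq {p k : ℕ} (hp : p.Prime) {s : Finset ℕ}
    (hs : ∀ n ∈ s, n ≠ 0 ∧ ¬ p ^ (k + 1) ∣ n) (c : ℕ → ℤ) :
    ∃ Q : ℕ, ¬ p ∣ Q ∧ ∃ y : ℤ, (Q : ℚ) * p ^ k * ∑ n ∈ s, (c n : ℚ) / n = y := by
  refine ⟨∏ i ∈ s, ordCompl[p] i, fun h => ?_, ?_⟩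
  · obtain ⟨n, hn, hpn⟩ := (hp.prime.dvd_finsetProd_iff _).mp h
    exact Nat.not_dvd_ordCompl hp (hs n hn).1 hpn
  · exact_mod_cast exists_int_mul_sum_div_eq
      (fun n hn => dvd_prod_ordCompl_mul_pow hp hn (hs n hn).1 (hs n hn).2) c

lemma sum_Icc_mul_sub_one_eq_sum_mul_add_sum_not_dvd {M : Type*} [AddCommMonoid M]
    (f : ℕ → M) (m : ℕ) {q : ℕ} (hq : 0 < q) :
    ∑ n ∈ Icc 1 (m * q - 1), f n =
      ∑ t ∈ Icc 1 (m - 1), f (q * t) + ∑ n ∈ Icc 1 (m * q - 1) with ¬ q ∣ n, f n := by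
  rw [← sum_filter_add_sum_filter_not _ (q ∣ ·)]
  congr 1
  have hmul : ((Icc 1 (m * q - 1)).filter (q ∣ ·)) = (Icc 1 (m - 1)).image (q * ·) := by
    ext n
    simp only [mem_filter, mem_Icc, mem_image]
    constructor
    · rintro ⟨⟨h1, h2⟩, t, rfl⟩
      have : t < m := Nat.lt_of_mul_lt_mul_left (a := q) (by rw [mul_comm q m]; omega)
      exact ⟨t, ⟨Nat.pos_of_ne_zero (by rintro rfl; simp at h1), by omega⟩, rfl⟩
    · rintro ⟨t, ⟨ht1, ht2⟩, rfl⟩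
      have : q * t < q * m := Nat.mul_lt_mul_of_pos_left (by omega) hq
      exact ⟨⟨Nat.mul_pos hq ht1, by rw [mul_comm m q]; omega⟩, dvd_mul_right q t⟩
  rw [hmul, sum_image fun a _ b _ hab => Nat.eq_of_mul_eq_mul_left hq hab]

lemma exists_int_eq_lcm_mul_one_div_sub_sum {m : ℕ} (hm : 1 ≤ m) {c : ℕ → ℤ}
    (hc : ∀ n ∈ Icc 1 (m - 1), |c n| ≤ 1) :
    ∃ z : ℤ, (((Icc 1 m).lcm id : ℕ) : ℚ) * (1 / m - ∑ t ∈ Icc 1 (m - 1), (c t : ℚ) / t) = z ∧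
      |(z : ℚ)| ≤ (((Icc 1 m).lcm id : ℕ) : ℚ) * ∑ j ∈ Icc 1 m, (1 : ℚ) / j := by
  have hdvd : ∀ n ∈ Icc 1 m, n ∣ (Icc 1 m).lcm id := fun n hn => dvd_lcm hn
  obtain ⟨y₁, hy₁⟩ := exists_int_mul_sum_div_eq (s := {m}) (by simpa using hdvd m (by simp [hm])) 1
  obtain ⟨y₂, hy₂⟩ := exists_int_mul_sum_div_eq (s := Icc 1 (m - 1)) (c := c)
    fun n hn => hdvd n (by simp only [mem_Icc] at hn ⊢; omega)
  simp only [sum_singleton, Pi.one_apply, Int.cast_one] at hy₁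
  have hz : (((Icc 1 m).lcm id : ℕ) : ℚ) * (1 / m - ∑ t ∈ Icc 1 (m - 1), (c t : ℚ) / t) =
      ((y₁ - y₂ : ℤ) : ℚ) := by
    push_cast
    rw [← hy₁, ← hy₂, mul_sub]
  have hH : ∑ j ∈ Icc 1 m, (1 : ℚ) / j = 1 / m + ∑ t ∈ Icc 1 (m - 1), (1 : ℚ) / t := by
    obtain ⟨l, rfl⟩ : ∃ l, m = l + 1 := ⟨m - 1, by omega⟩
    rw [sum_Icc_succ_top (by omega), Nat.add_sub_cancel, add_comm]
  refine ⟨y₁ - y₂, hz, ?_⟩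
  rw [← hz, abs_mul, Nat.abs_cast, hH]
  gcongr
  calc _ ≤ |(1 : ℚ) / m| + |∑ t ∈ Icc 1 (m - 1), (c t : ℚ) / t| := abs_sub _ _
    _ ≤ _ := by
      rw [abs_of_nonneg (by positivity)]
      gcongr
      exact abs_sum_div_le_sum_one_div hc

lemma prime_dvd_of_rat_mul_eq {p d Q : ℕ} (hp : p.Prime) (hQ : ¬ p ∣ Q) {r : ℚ} {z y : ℤ}
    (hz : (d : ℚ) * r = z) (hy : (Q : ℚ) * r = p * y) : (p : ℤ) ∣ z := by
  have hQz : (Q : ℤ) * z = p * (d * y) := by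
    have : (Q : ℚ) * z = p * (d * y) := by
      rw [← hz, mul_left_comm, hy]
      ring
    exact_mod_cast this
  exact ((Nat.prime_iff_prime_int.mp hp).dvd_or_dvd ⟨_, hQz⟩).resolve_left
    (by exact_mod_cast hQ)

theorem memU_mul_prime_pow_of_gt (m p k : ℕ) (hm : memU m) (hp : p.Prime) (hk : 1 ≤ k)
    (hpg : (((Finset.Icc 1 m).lcm id : ℕ) : ℚ) * ∑ j ∈ Finset.Icc 1 m, (1 : ℚ) / (j : ℚ)
      < (p : ℚ)) :
    memU (m * p ^ k) := by
  obtain ⟨hm1, hmU⟩ := hm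
  obtain ⟨j, rfl⟩ : ∃ j, k = j + 1 := ⟨k - 1, by omega⟩
  set q := p ^ (j + 1) with hq_def
  have hq : 0 < q := pow_pos hp.pos _
  refine ⟨Nat.mul_pos hm1 hq, fun w hw heq => ?_⟩
  set T := ∑ t ∈ Icc 1 (m - 1), (w (q * t) : ℚ) / t
  set S := ∑ n ∈ Icc 1 (m * q - 1) with ¬ q ∣ n, (w n : ℚ) / n
  have hS : (q : ℚ) * S = 1 / m - T := by
    have hT : ∑ t ∈ Icc 1 (m - 1), (w (q * t) : ℚ) / ((q * t : ℕ) : ℚ) = T / q := by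
      rw [sum_div]
      exact sum_congr rfl fun t _ => by rw [Nat.cast_mul, div_mul_eq_div_div_swap]
    have hq0 : (q : ℚ) ≠ 0 := by positivity
    rw [sum_Icc_mul_sub_one_eq_sum_mul_add_sum_not_dvd _ m hq, hT, Nat.cast_mul] at heq
    field_simp at heq ⊢
    linarith
  obtain ⟨z, hz, hz_le⟩ := exists_int_eq_lcm_mul_one_div_sub_sum hm1
    (c := fun t => w (q * t)) fun n _ => by rcases hw (q * n) with h | h | h <;> simp [h]
  have hz0 : z ≠ 0 := by
    rintro rfl
    refine hmU (fun t => w (q * t)) (fun n => hw _) (sub_eq_zero.mp ?_).symm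
    simpa [Finset.lcm_eq_zero_iff] using hz
  obtain ⟨Q, hpQ, y, hy⟩ := exists_not_dvd_mul_pow_mul_sum_div_eq hp (k := j)
    (s := (Icc 1 (m * q - 1)).filter (¬ q ∣ ·)) (fun n hn => by
      simp only [mem_filter, mem_Icc] at hn; exact ⟨by omega, hn.2⟩) w
  have hpz : (p : ℤ) ∣ z := prime_dvd_of_rat_mul_eq hp hpQ hz (y := y) (by
    rw [← hS, ← hy, hq_def]; push_cast; ring)
  have hpz_le : (p : ℚ) ≤ |(z : ℚ)| := by
    exact_mod_cast Int.le_of_dvd (abs_pos.mpr hz0) ((dvd_abs _ _).mpr hpz)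
  linarith
end

section
/- Every prime power p^k (p prime, k ≥ 1) belongs to 𝒰; that is, 1/p^k cannot be written as ∑_{n=1}^{p^k-1} w_n/n with w_n ∈ {-1,0,1}. -/
namespace padicNorm

variable {p : ℕ} [hp : Fact p.Prime]

theorem one_div_pow (k : ℕ) : padicNorm p (1 / (p : ℚ) ^ k) = (p : ℚ) ^ (k : ℤ) := by
  rw [one_div, padicNorm.eq_zpow_of_nonzero (by simp [hp.out.ne_zero]),
    padicValRat.inv, padicValRat.pow, padicValRat.self hp.out.one_lt]
  simp

theorem zpow_neg_lt_natCast {n k : ℕ} (hn0 : 0 < n) (hn : n < p ^ k) :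
    (p : ℚ) ^ (-k : ℤ) < padicNorm p n := by
  have hndvd : ¬ ((p ^ k : ℕ) : ℤ) ∣ (n : ℤ) := fun h ↦
    (Nat.le_of_dvd hn0 (Int.natCast_dvd_natCast.mp h)).not_gt hn
  rw [dvd_iff_norm_le, not_le] at hndvd
  exact_mod_cast hndvd

theorem intCast_div_natCast_lt (z : ℤ) {n k : ℕ} (hn0 : 0 < n) (hn : n < p ^ k) :
    padicNorm p (z / n) < (p : ℚ) ^ (k : ℤ) := by
  have hp0 : (0 : ℚ) < p := by exact_mod_cast hp.out.pos
  have hlt := zpow_neg_lt_natCast hn0 hn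
  rw [padicNorm.div, div_lt_iff₀ ((zpow_pos hp0 _).trans hlt)]
  calc padicNorm p z ≤ 1 := padicNorm.of_int z
    _ = (p : ℚ) ^ (k : ℤ) * (p : ℚ) ^ (-k : ℤ) := by rw [← zpow_add₀ hp0.ne']; simp
    _ < (p : ℚ) ^ (k : ℤ) * padicNorm p n := mul_lt_mul_of_pos_left hlt (zpow_pos hp0 _)

theorem sum_Icc_intCast_div_natCast_lt (w : ℕ → ℤ) (k : ℕ) :
    padicNorm p (∑ n ∈ Finset.Icc 1 (p ^ k - 1), (w n : ℚ) / n) < (p : ℚ) ^ (k : ℤ) := by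
  refine sum_lt' (fun n hn ↦ ?_) (zpow_pos (by exact_mod_cast hp.out.pos) _)
  rw [Finset.mem_Icc] at hn
  exact intCast_div_natCast_lt (w n) hn.1 (by have := Nat.one_le_pow k p hp.out.pos; omega)

end padicNorm

theorem memU_prime_pow_general (p k : ℕ) (hp : p.Prime) : memU (p ^ k) := by
  have : Fact p.Prime := ⟨hp⟩
  refine ⟨Nat.one_le_pow _ _ hp.pos, fun w _ hsum ↦ ?_⟩
  have hlt := padicNorm.sum_Icc_intCast_div_natCast_lt (p := p) w k
  rw [hsum, Nat.cast_pow, padicNorm.one_div_pow] at hlt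
  exact lt_irrefl _ hlt

theorem memU_prime_pow (p k : ℕ) (hp : p.Prime) (hk : 1 ≤ k) : memU (p ^ k) :=
  memU_prime_pow_general p k hp
end

section
/- Define h_1 := 1, h_k := e^{h_{k−1}} + 1/4, and T_1(z) := ln z for z > h_1 (0 otherwise), T_k(z) := ∫_{h_{k−1}}^{ln(z−1/4)} T_{k−1}(w) dw for z > h_k (0 otherwise). If for some k ≥ 3 and constant a_{k−1} ≥ 1 one has T_{k−1}(z) ≥ ∏_{j=1}^{k−1} ln_j z − a_{k−1} ∏_{j=1}^{k−2} ln_j z for all z ≥ e_{k−1}, then T_k(z) ≥ ∏_{j=1}^{k} ln_j z − a_k ∏_{j=1}^{k−1} ln_j z for all z ≥ e_k, where a_k := a_{k−1} + 1/e_{k−2} + (k−2)/(e_{k−2} e_{k−3}). -/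
/-!
Write `P_m(x) = ∏_{j=1}^m ln_j x` (`logProd m x`), so the claim is `T_k ≥ P_k - a_k P_{k-1}`
on `[e_k, ∞)`. Since `ln_k z ≤ z / e_k`, for `z ≤ e_k + 1/4` we have `ln_k z ≤ 1 + 1/e_{k-2} ≤ a_k`,
and the left side is `≤ 0`. Otherwise put `u = ln (z - 1/4) ≥ e_{k-1}` and `v = ln z`, so that
`P_k(z) = v P_{k-1}(v)`. The derivative of `x P_{k-1}(x)` is `P_{k-1}(x) + P_{k-2}(ln x) + ⋯`,
which is at most `P_{k-1} + (a_k - a_{k-1}) P_{k-2}` on `[e_{k-1}, ∞)`; integrating the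
hypothesis over `[e_{k-1}, u]` therefore gives
`T_k(z) ≥ u P_{k-1}(u) - e_{k-1} P_{k-2}(e_{k-1}) - a_k (u - e_{k-1}) P_{k-2}(u)`.
Passing from `u` to `v` costs at most `1` in `x P_{k-1}(x)`, because `v - u ≤ 1/(4 e^u)` while
the derivative stays below `e^v`; the remaining `a_k e_{k-1} P_{k-2}(u)` pays for this `1` and
for the boundary term at `e_{k-1}`.
-/

/-- `etower k` is the tower of `k` exponentials in `e`: `e_0 = 1`, `e_k = e^{e_{k-1}}`. -/
noncomputable def etower : ℕ → ℝ
  | 0 => 1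
  | k + 1 => Real.exp (etower k)

/-- `hseq 1 = 1` and `hseq (k+1) = e^{hseq k} + 1/4`. -/
noncomputable def hseq : ℕ → ℝ
  | 0 => 0
  | 1 => 1
  | k + 2 => Real.exp (hseq (k + 1)) + 1 / 4

/-- `Tfun 1 z = ln z` for `z > hseq 1` (and `0` otherwise), and
`Tfun k z = ∫_{hseq (k-1)}^{ln(z - 1/4)} Tfun (k-1)` for `z > hseq k` (and `0` otherwise). -/
noncomputable def Tfun : ℕ → ℝ → ℝ
  | 0 => fun _ => 0
  | 1 => fun z => if hseq 1 < z then Real.log z else 0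
  | k + 2 => fun z =>
      if hseq (k + 2) < z then
        ∫ w in hseq (k + 1)..Real.log (z - 1 / 4), Tfun (k + 1) w
      else 0

open Real

lemma etower_succ (n : ℕ) : etower (n + 1) = exp (etower n) := rfl

lemma one_le_etower : ∀ n, 1 ≤ etower n
  | 0 => le_rfl
  | n + 1 => (one_le_etower n).trans <| by linarith [add_one_le_exp (etower n), etower_succ n]

lemma etower_pos (n : ℕ) : 0 < etower n := one_pos.trans_le (one_le_etower n)

lemma etower_mono : Monotone etower :=
  monotone_nat_of_le_succ fun n => by linarith [add_one_le_exp (etower n), etower_succ n]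

lemma natCast_add_one_le_etower : ∀ n : ℕ, (n : ℝ) + 1 ≤ etower n
  | 0 => by simp [etower]
  | n + 1 => by
    push_cast
    linarith [natCast_add_one_le_etower n, add_one_le_exp (etower n), etower_succ n]

lemma log_etower_succ (n : ℕ) : log (etower (n + 1)) = etower n := log_exp _

lemma etower_le_log {n : ℕ} {x : ℝ} (hx : etower (n + 1) ≤ x) : etower n ≤ log x :=
  log_etower_succ n ▸ log_le_log (etower_pos _) hx

lemma mul_exp_le_mul_exp {c t : ℝ} (hc : 1 ≤ c) (hct : c ≤ t) : t * exp c ≤ c * exp t := by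
  have hsplit : exp t = exp c * exp (t - c) := by rw [← exp_add]; ring_nf
  have hexp := mul_le_mul_of_nonneg_left (add_one_le_exp (t - c))
    (mul_nonneg (by linarith) (exp_pos c).le : 0 ≤ c * exp c)
  have hcross : 0 ≤ (c - 1) * (t - c) * exp c :=
    mul_nonneg (mul_nonneg (by linarith) (by linarith)) (exp_pos c).le
  rw [hsplit]
  linarith

lemma add_sq_le_exp {s : ℝ} (hs : 0 ≤ s) : s + s ^ 2 ≤ exp s := by
  have := sum_le_exp_of_nonneg hs 4
  simp only [Finset.sum_range_succ, Finset.sum_range_zero, Nat.factorial] at this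
  norm_num at this
  nlinarith [mul_nonneg (sq_nonneg (s - 2)) (by linarith : 0 ≤ s + 1)]

lemma add_one_mul_pow_le_exp : ∀ (m : ℕ) {t : ℝ}, etower m ≤ t →
    ((m : ℝ) + 1) * t ^ m ≤ exp t
  | 0, t, ht => by simpa using one_le_exp ((zero_le_one.trans (one_le_etower 0)).trans ht)
  | k + 1, t, ht => by
    have ht0 : 0 < t := (etower_pos _).trans_le ht
    set s := log t
    have hs : (k : ℝ) + 1 ≤ s := (natCast_add_one_le_etower k).trans (etower_le_log ht)
    calc ((k + 1 : ℕ) + 1 : ℝ) * t ^ (k + 1) ≤ exp ((k : ℝ) + 1) * exp s ^ (k + 1) := by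
          rw [exp_log ht0]
          gcongr
          push_cast
          linarith [add_one_le_exp ((k : ℝ) + 1)]
      _ = exp (((k : ℝ) + 1) * (s + 1)) := by
          rw [← exp_nat_mul, ← exp_add]; push_cast; ring_nf
      _ ≤ exp (s + s ^ 2) := exp_le_exp.2 (by nlinarith)
      _ ≤ exp (exp s) := exp_le_exp.2 (add_sq_le_exp (by linarith))
      _ = exp t := by rw [exp_log ht0]

lemma etower_le_iterate_log : ∀ (j : ℕ) {n : ℕ} {x : ℝ}, etower (n + j) ≤ x →
    etower n ≤ log^[j] x
  | 0, _, _, hx => hx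
  | j + 1, _, _, hx => by
    rw [Function.iterate_succ_apply]
    exact etower_le_iterate_log j (etower_le_log hx)

lemma one_le_iterate_log {j : ℕ} {x : ℝ} (hx : etower j ≤ x) : 1 ≤ log^[j] x :=
  etower_le_iterate_log j (n := 0) (by rwa [zero_add])

lemma iterate_log_etower (j : ℕ) : log^[j] (etower j) = 1 := by
  induction j with
  | zero => rfl
  | succ j ih => rw [Function.iterate_succ_apply, log_etower_succ, ih]

lemma iterate_log_le_iterate_log : ∀ (j : ℕ) {x y : ℝ}, etower j ≤ x → x ≤ y →
    log^[j] x ≤ log^[j] y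
  | 0, _, _, _, hxy => hxy
  | j + 1, _, _, hx, hxy => by
    simp only [Function.iterate_succ_apply]
    exact iterate_log_le_iterate_log j (etower_le_log hx)
      (log_le_log ((etower_pos _).trans_le hx) hxy)

lemma iterate_log_mul_etower_le : ∀ (n : ℕ) {y : ℝ}, etower n ≤ y →
    log^[n] y * etower n ≤ y
  | 0, _, _ => by simp [etower]
  | n + 1, y, hy => by
    rw [Function.iterate_succ_apply]
    have hly := etower_le_log hy
    have ih := iterate_log_mul_etower_le n hly
    have key : log y * etower (n + 1) ≤ etower n * y := by
      have := mul_exp_le_mul_exp (one_le_etower n) hly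
      rwa [exp_log ((etower_pos _).trans_le hy), ← etower_succ] at this
    nlinarith [etower_pos n, mul_le_mul_of_nonneg_right ih (etower_pos (n + 1)).le]

noncomputable def logProd (m : ℕ) (x : ℝ) : ℝ := ∏ j ∈ Finset.Icc 1 m, log^[j] x

lemma logProd_zero (x : ℝ) : logProd 0 x = 1 := by simp [logProd]

lemma logProd_succ (m : ℕ) (x : ℝ) : logProd (m + 1) x = logProd m x * log^[m + 1] x :=
  Finset.prod_Icc_succ_top (Nat.le_add_left 1 m) _

lemma logProd_succ' : ∀ (m : ℕ) (x : ℝ), logProd (m + 1) x = log x * logProd m (log x)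
  | 0, x => by simp [logProd]
  | m + 1, x => by
    rw [logProd_succ (m + 1), logProd_succ' m, logProd_succ m (log x),
      Function.iterate_succ_apply]
    ring

section logProd

variable {m : ℕ} {x y : ℝ}

lemma one_le_logProd (hx : etower m ≤ x) : 1 ≤ logProd m x :=
  Finset.one_le_prod fun _ hj =>
    one_le_iterate_log ((etower_mono (Finset.mem_Icc.1 hj).2).trans hx)

lemma logProd_nonneg (hx : etower m ≤ x) : 0 ≤ logProd m x :=
  zero_le_one.trans (one_le_logProd hx)

lemma logProd_le_logProd (hx : etower m ≤ x) (hxy : x ≤ y) : logProd m x ≤ logProd m y := by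
  refine Finset.prod_le_prod (fun j hj => ?_) fun j hj => ?_ <;>
    have hjx := (etower_mono (Finset.mem_Icc.1 hj).2).trans hx
  · exact zero_le_one.trans (one_le_iterate_log hjx)
  · exact iterate_log_le_iterate_log j hjx hxy

lemma monotoneOn_logProd : MonotoneOn (logProd m) (Set.Ici (etower m)) :=
  fun _ hx _ _ hxy => logProd_le_logProd hx hxy

lemma logProd_le_pow (hx : etower m ≤ x) : logProd m x ≤ x ^ m := by
  have hle : logProd m x ≤ ∏ _j ∈ Finset.Icc 1 m, x := by
    refine Finset.prod_le_prod (fun j hj => ?_) fun j hj => ?_ <;>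
      have hjx := (etower_mono (Finset.mem_Icc.1 hj).2).trans hx
    · exact zero_le_one.trans (one_le_iterate_log hjx)
    · nlinarith [iterate_log_mul_etower_le j hjx, one_le_etower j, one_le_iterate_log hjx]
  simpa using hle

lemma logProd_log_mul_etower_le (hx : etower (m + 1) ≤ x) :
    logProd m (log x) * etower m ≤ logProd m x := by
  have hy := etower_le_log hx
  have hy0 : 0 < log x := (etower_pos m).trans_le hy
  have hshift : logProd m (log x) * log x = logProd m x * log^[m] (log x) := by
    rw [← Function.iterate_succ_apply, ← logProd_succ, logProd_succ']
    ring
  refine le_of_mul_le_mul_right ?_ hy0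
  nlinarith [iterate_log_mul_etower_le m hy, logProd_nonneg ((etower_mono m.le_succ).trans hx)]

end logProd

/-- The derivative of `x ↦ x P_m(x)`, computed through `x P_{m+1}(x) = x · (ln x P_m(ln x))`. -/
noncomputable def mulLogProdDeriv : ℕ → ℝ → ℝ
  | 0 => fun _ => 1
  | m + 1 => fun x => logProd (m + 1) x + mulLogProdDeriv m (log x)

lemma hasDerivAt_mul_logProd : ∀ (m : ℕ) {x : ℝ}, etower m ≤ x →
    HasDerivAt (fun y => y * logProd m y) (mulLogProdDeriv m x) x
  | 0, x, _ => by simpa [logProd_zero, mulLogProdDeriv] using hasDerivAt_id' x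
  | m + 1, x, hx => by
    have hx0 : 0 < x := (etower_pos _).trans_le hx
    have hfun : (fun y => y * logProd (m + 1) y) = fun y => y * (log y * logProd m (log y)) :=
      funext fun y => by rw [logProd_succ']
    rw [hfun]
    refine ((hasDerivAt_id' x).fun_mul ((hasDerivAt_mul_logProd m (etower_le_log hx)).comp x
      (hasDerivAt_log hx0.ne'))).congr_deriv ?_
    simp only [mulLogProdDeriv, logProd_succ', Function.comp_apply]
    field_simp

lemma mulLogProdDeriv_le : ∀ (m : ℕ) {x : ℝ}, etower m ≤ x →
    mulLogProdDeriv m x ≤ ((m : ℝ) + 1) * logProd m x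
  | 0, _, _ => by simp [mulLogProdDeriv, logProd_zero]
  | m + 1, x, hx => by
    have hy := etower_le_log hx
    have ih := mulLogProdDeriv_le m hy
    have hP : logProd m (log x) ≤ logProd (m + 1) x := by
      rw [logProd_succ']
      nlinarith [logProd_nonneg hy, one_le_etower m]
    simp only [mulLogProdDeriv]
    push_cast
    nlinarith

/-- The increment `a_k - a_{k-1} = 1/e_{k-2} + (k-2)/(e_{k-2} e_{k-3})` for `k = n + 3`. -/
noncomputable def boundIncrement (n : ℕ) : ℝ :=
  1 / etower (n + 1) + ((n : ℝ) + 1) / (etower (n + 1) * etower n)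

lemma one_div_etower_le_boundIncrement (n : ℕ) : 1 / etower (n + 1) ≤ boundIncrement n := by
  have : 0 ≤ ((n : ℝ) + 1) / (etower (n + 1) * etower n) := by
    have := etower_pos n; have := etower_pos (n + 1); positivity
  simp only [boundIncrement]
  linarith

lemma mulLogProdDeriv_add_two_le (n : ℕ) {x : ℝ} (hx : etower (n + 2) ≤ x) :
    mulLogProdDeriv (n + 2) x ≤ logProd (n + 2) x + boundIncrement n * logProd (n + 1) x := by
  have hy := etower_le_log hx
  have hly := etower_le_log hy
  have hE0 := etower_pos n
  have hE1 := etower_pos (n + 1)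
  have hfirst : logProd (n + 1) (log x) * etower (n + 1) ≤ logProd (n + 1) x :=
    logProd_log_mul_etower_le hx
  have hsecond : logProd n (log (log x)) * etower n ≤ logProd (n + 1) (log x) := by
    rw [logProd_succ']
    nlinarith [logProd_nonneg hly]
  have hfirst' : logProd (n + 1) (log x) ≤ 1 / etower (n + 1) * logProd (n + 1) x := by
    rw [one_div_mul_eq_div, le_div_iff₀ hE1]; exact hfirst
  have hsecond' : ((n : ℝ) + 1) * logProd n (log (log x)) ≤
      ((n : ℝ) + 1) / (etower (n + 1) * etower n) * logProd (n + 1) x := by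
    rw [div_mul_eq_mul_div, le_div_iff₀ (by positivity)]
    have := mul_le_mul_of_nonneg_right hsecond hE1.le
    have hn : (0 : ℝ) ≤ n + 1 := by positivity
    nlinarith
  have hrest := mulLogProdDeriv_le n hly
  simp only [mulLogProdDeriv, boundIncrement, add_mul]
  linarith

lemma mul_logProd_sub_le_integral {m : ℕ} {a b : ℝ} (ha : etower m ≤ a) (hab : a ≤ b)
    {φ : ℝ → ℝ} (hφ : MeasureTheory.IntegrableOn φ (Set.Icc a b))
    (hderiv : ∀ x ∈ Set.Ioo a b, mulLogProdDeriv m x ≤ φ x) :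
    b * logProd m b - a * logProd m a ≤ ∫ x in a..b, φ x :=
  intervalIntegral.sub_le_integral_of_hasDeriv_right_of_le hab
    (fun _ hx => (hasDerivAt_mul_logProd m (ha.trans hx.1)).continuousAt.continuousWithinAt)
    (fun _ hx => (hasDerivAt_mul_logProd m (ha.trans hx.1.le)).hasDerivWithinAt) hφ hderiv

lemma mul_logProd_log_sub_le_one (m : ℕ) {z : ℝ} (hz : etower (m + 1) ≤ z - 1 / 4) :
    log z * logProd m (log z) - log (z - 1 / 4) * logProd m (log (z - 1 / 4)) ≤ 1 := by
  have hz0 : 0 < z - 1 / 4 := (etower_pos _).trans_le hz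
  have hz1 : 1 ≤ z - 1 / 4 := (one_le_etower _).trans hz
  have hu := etower_le_log hz
  have huv : log (z - 1 / 4) ≤ log z := log_le_log hz0 (by linarith)
  have hv := hu.trans huv
  have hslope : ∀ x ∈ Set.Ioo (log (z - 1 / 4)) (log z), mulLogProdDeriv m x ≤ z := by
    intro x hx
    have hxm := hu.trans hx.1.le
    calc mulLogProdDeriv m x ≤ ((m : ℝ) + 1) * logProd m x := mulLogProdDeriv_le m hxm
      _ ≤ ((m : ℝ) + 1) * (log z) ^ m := by
          gcongr
          exact (logProd_le_logProd hxm hx.2.le).trans (logProd_le_pow hv)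
      _ ≤ exp (log z) := add_one_mul_pow_le_exp m hv
      _ = z := exp_log (by linarith)
  have hgap : log z - log (z - 1 / 4) ≤ 1 / (4 * (z - 1 / 4)) := by
    have := log_le_sub_one_of_pos (div_pos (by linarith) hz0 : 0 < z / (z - 1 / 4))
    rw [log_div (by linarith) hz0.ne'] at this
    have hq : z / (z - 1 / 4) - 1 = 1 / (4 * (z - 1 / 4)) := by
      rw [div_sub_one hz0.ne', div_eq_div_iff hz0.ne' (by positivity)]; ring
    linarith
  have hint := mul_logProd_sub_le_integral hu huv continuous_const.integrableOn_Icc hslope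
  rw [intervalIntegral.integral_const, smul_eq_mul] at hint
  have : (log z - log (z - 1 / 4)) * z ≤ 1 := by
    calc (log z - log (z - 1 / 4)) * z ≤ 1 / (4 * (z - 1 / 4)) * z := by gcongr; linarith
      _ ≤ 1 := by rw [div_mul_eq_mul_div, div_le_one (by positivity)]; linarith
  linarith

lemma hseq_add_two (k : ℕ) : hseq (k + 2) = exp (hseq (k + 1)) + 1 / 4 := rfl

lemma Tfun_one (z : ℝ) : Tfun 1 z = if 1 < z then log z else 0 := rfl

lemma Tfun_add_two (k : ℕ) (z : ℝ) : Tfun (k + 2) z =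
    if hseq (k + 2) < z then ∫ w in hseq (k + 1)..log (z - 1 / 4), Tfun (k + 1) w else 0 := rfl

lemma one_le_hseq : ∀ k, 1 ≤ hseq (k + 1)
  | 0 => le_rfl
  | k + 1 => by
    rw [hseq_add_two]
    linarith [one_le_exp ((zero_le_one).trans (one_le_hseq k))]

lemma hseq_add_half_le_etower : ∀ k, hseq (k + 1) + 1 / 2 ≤ etower (k + 1)
  | 0 => by
    show (1 : ℝ) + 1 / 2 ≤ exp 1
    linarith [add_one_le_exp (1 : ℝ)]
  | k + 1 => by
    rw [hseq_add_two, etower_succ]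
    have hexp : exp (hseq (k + 1)) * (1 / 2 + 1) ≤ exp (etower (k + 1)) := by
      calc exp (hseq (k + 1)) * (1 / 2 + 1) ≤ exp (hseq (k + 1)) * exp (1 / 2) := by
            gcongr; exact add_one_le_exp _
        _ = exp (hseq (k + 1) + 1 / 2) := (exp_add _ _).symm
        _ ≤ exp (etower (k + 1)) := exp_le_exp.2 (hseq_add_half_le_etower k)
    linarith [add_one_le_exp (hseq (k + 1)), one_le_hseq k]

lemma hseq_lt_log_sub {k : ℕ} {z : ℝ} (hz : hseq (k + 2) < z) :
    hseq (k + 1) < log (z - 1 / 4) := by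
  rw [hseq_add_two] at hz
  exact (lt_log_iff_exp_lt (by linarith [exp_pos (hseq (k + 1))])).2 (by linarith)

lemma Tfun_nonneg : ∀ (r : ℕ) (x : ℝ), 0 ≤ Tfun r x
  | 0, _ => le_rfl
  | 1, x => by
    rw [Tfun_one]
    split_ifs with hx
    exacts [log_nonneg hx.le, le_rfl]
  | r + 2, x => by
    rw [Tfun_add_two]
    split_ifs with hx
    exacts [intervalIntegral.integral_nonneg (hseq_lt_log_sub hx).le fun w _ =>
      Tfun_nonneg (r + 1) w, le_rfl]

lemma Tfun_monotone : ∀ r, Monotone (Tfun (r + 1))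
  | 0, x, y, hxy => by
    by_cases hx : 1 < x
    · rw [Tfun_one, Tfun_one, if_pos hx, if_pos (hx.trans_le hxy)]
      exact log_le_log (zero_lt_one.trans hx) hxy
    · rw [Tfun_one, if_neg hx]
      exact Tfun_nonneg (0 + 1) y
  | r + 1, x, y, hxy => by
    by_cases hx : hseq (r + 2) < x
    · rw [Tfun_add_two, Tfun_add_two, if_pos hx, if_pos (hx.trans_le hxy)]
      have hx4 : 0 < x - 1 / 4 := by linarith [exp_pos (hseq (r + 1)), hseq_add_two r]
      exact intervalIntegral.integral_mono_interval le_rfl (hseq_lt_log_sub hx).le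
        (log_le_log hx4 (by linarith))
        (Filter.Eventually.of_forall fun w => Tfun_nonneg (r + 1) w)
        (Tfun_monotone r).intervalIntegrable
    · rw [Tfun_add_two, if_neg hx]
      exact Tfun_nonneg (r + 2) y

lemma integral_le_Tfun (r : ℕ) {c z : ℝ} (hz : hseq (r + 2) < z) (hc : hseq (r + 1) ≤ c)
    (hcz : c ≤ log (z - 1 / 4)) :
    ∫ w in c..log (z - 1 / 4), Tfun (r + 1) w ≤ Tfun (r + 2) z := by
  rw [Tfun_add_two, if_pos hz]
  exact intervalIntegral.integral_mono_interval hc hcz le_rfl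
    (Filter.Eventually.of_forall fun w => Tfun_nonneg (r + 1) w)
    (Tfun_monotone r).intervalIntegrable

lemma logProd_sub_nonpos_of_le (n : ℕ) {a z : ℝ} (ha : 1 ≤ a) (hz : etower (n + 3) ≤ z)
    (hz' : z ≤ etower (n + 3) + 1 / 4) :
    logProd (n + 3) z - (a + boundIncrement n) * logProd (n + 2) z ≤ 0 := by
  have hE1 := etower_pos (n + 1)
  have hE3 := etower_pos (n + 3)
  have hE13 : etower (n + 1) ≤ etower (n + 3) := etower_mono (by omega)
  have hlast : log^[n + 3] z ≤ 1 + 1 / etower (n + 1) := by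
    have h13 : 1 ≤ etower (n + 3) / etower (n + 1) := (one_le_div hE1).2 hE13
    calc log^[n + 3] z ≤ z / etower (n + 3) :=
          (le_div_iff₀ (etower_pos _)).2 (iterate_log_mul_etower_le (n + 3) hz)
      _ ≤ (etower (n + 3) + etower (n + 3) / etower (n + 1)) / etower (n + 3) :=
          div_le_div_of_nonneg_right (by linarith) hE3.le
      _ = 1 + 1 / etower (n + 1) := by field_simp
  have hsplit : logProd (n + 3) z = logProd (n + 2) z * log^[n + 3] z := logProd_succ (n + 2) z
  have := one_div_etower_le_boundIncrement n
  rw [hsplit]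
  nlinarith [logProd_nonneg ((etower_mono (n + 2).le_succ).trans hz)]

lemma mul_logProd_sub_le_integral_Tfun (n : ℕ) {a u : ℝ} (ha : 1 ≤ a)
    (hind : ∀ w, etower (n + 2) ≤ w →
      logProd (n + 2) w - a * logProd (n + 1) w ≤ Tfun (n + 2) w)
    (hu : etower (n + 2) ≤ u) :
    u * logProd (n + 2) u - etower (n + 2) * logProd (n + 1) (etower (n + 2))
      - (a + boundIncrement n) * ((u - etower (n + 2)) * logProd (n + 1) u)
      ≤ ∫ w in etower (n + 2)..u, Tfun (n + 2) w := by
  set A := a + boundIncrement n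
  set E2 := etower (n + 2)
  have hE12 : etower (n + 1) ≤ E2 := etower_mono (n + 1).le_succ
  have hA0 : 0 ≤ A := by
    linarith [one_div_etower_le_boundIncrement n, one_div_pos.2 (etower_pos (n + 1))]
  have hQint : IntervalIntegrable (logProd (n + 1)) MeasureTheory.volume E2 u :=
    (monotoneOn_logProd.mono fun w hw => hE12.trans (Set.uIcc_of_le hu ▸ hw).1).intervalIntegrable
  have hTint : IntervalIntegrable (Tfun (n + 2)) MeasureTheory.volume E2 u :=
    (Tfun_monotone (n + 1)).intervalIntegrable
  have hFTC : u * logProd (n + 2) u - E2 * logProd (n + 2) E2 ≤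
      (∫ w in E2..u, Tfun (n + 2) w) + A * ∫ w in E2..u, logProd (n + 1) w := by
    rw [← intervalIntegral.integral_const_mul, ← intervalIntegral.integral_add hTint
      (hQint.const_mul A)]
    refine mul_logProd_sub_le_integral le_rfl hu
      ((intervalIntegrable_iff_integrableOn_Icc_of_le hu).1 (hTint.add (hQint.const_mul A)))
      fun w hw => ?_
    have := mulLogProdDeriv_add_two_le n hw.1.le
    have := hind w hw.1.le
    linarith
  have hQle : ∫ w in E2..u, logProd (n + 1) w ≤ (u - E2) * logProd (n + 1) u := by
    simpa using intervalIntegral.integral_mono_on hu hQint intervalIntegrable_const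
      fun w hw => logProd_le_logProd (hE12.trans hw.1) hw.2
  have hPE2 : logProd (n + 2) E2 = logProd (n + 1) E2 := by
    rw [logProd_succ, iterate_log_etower, mul_one]
  rw [hPE2] at hFTC
  have := mul_le_mul_of_nonneg_left hQle hA0
  linarith

lemma Tfun_lower_bound_of_lt (n : ℕ) {a z : ℝ} (ha : 1 ≤ a)
    (hind : ∀ w, etower (n + 2) ≤ w →
      logProd (n + 2) w - a * logProd (n + 1) w ≤ Tfun (n + 2) w)
    (hz : etower (n + 3) + 1 / 4 < z) :
    logProd (n + 3) z - (a + boundIncrement n) * logProd (n + 2) z ≤ Tfun (n + 3) z := by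
  rw [logProd_succ' (n + 2) z, logProd_succ' (n + 1) z]
  set A := a + boundIncrement n
  set E2 := etower (n + 2)
  set u := log (z - 1 / 4)
  set v := log z
  have hE1 := etower_pos (n + 1)
  have hE12 : etower (n + 1) ≤ E2 := etower_mono (n + 1).le_succ
  have hA : 1 + 1 / etower (n + 1) ≤ A := by linarith [one_div_etower_le_boundIncrement n]
  have hu : E2 ≤ u := etower_le_log (by linarith)
  have huv : u ≤ v := log_le_log (by linarith [etower_pos (n + 3)]) (by linarith)
  have hT : ∫ w in E2..u, Tfun (n + 2) w ≤ Tfun (n + 3) z :=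
    integral_le_Tfun (n + 1) (by linarith [hseq_add_half_le_etower (n + 2)])
      (by linarith [hseq_add_half_le_etower (n + 1)]) hu
  have hlower := mul_logProd_sub_le_integral_Tfun n ha hind hu
  have hgap : v * logProd (n + 2) v - u * logProd (n + 2) u ≤ 1 :=
    mul_logProd_log_sub_le_one (n + 2) (by linarith)
  have hQE2u : logProd (n + 1) E2 ≤ logProd (n + 1) u := logProd_le_logProd hE12 hu
  have hQu : 1 ≤ logProd (n + 1) u := one_le_logProd (hE12.trans hu)
  have hQuv : u * logProd (n + 1) u ≤ v * logProd (n + 1) v :=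
    mul_le_mul huv (logProd_le_logProd (hE12.trans hu) huv) (by linarith)
      ((etower_pos _).le.trans (hu.trans huv))
  have hE2Q : 0 ≤ E2 * logProd (n + 1) u := mul_nonneg (etower_pos _).le (by linarith)
  -- `A E2 P_{n+1}(u) ≥ E2 P_{n+1}(E2) + E2 P_{n+1}(u) / e_{n+1}`, and the last term is `≥ 1`
  have hslack : 1 ≤ 1 / etower (n + 1) * (E2 * logProd (n + 1) u) := by
    rw [one_div_mul_eq_div, le_div_iff₀ hE1]; nlinarith
  have := mul_le_mul_of_nonneg_left hQuv (by linarith [one_div_pos.2 hE1] : 0 ≤ A)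
  have := mul_le_mul_of_nonneg_right hA hE2Q
  have := mul_le_mul_of_nonneg_left hQE2u (etower_pos (n + 2)).le
  linarith

theorem Tfun_lower_bound_step (k : ℕ) (hk : 3 ≤ k) (a : ℝ) (ha : 1 ≤ a)
    (hind : ∀ z : ℝ, etower (k - 1) ≤ z →
      (∏ j ∈ Finset.Icc 1 (k - 1), Real.log^[j] z)
        - a * ∏ j ∈ Finset.Icc 1 (k - 2), Real.log^[j] z ≤ Tfun (k - 1) z) :
    ∀ z : ℝ, etower k ≤ z →
      (∏ j ∈ Finset.Icc 1 k, Real.log^[j] z)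
        - (a + 1 / etower (k - 2) + ((k : ℝ) - 2) / (etower (k - 2) * etower (k - 3)))
          * ∏ j ∈ Finset.Icc 1 (k - 1), Real.log^[j] z ≤ Tfun k z := by
  obtain ⟨n, rfl⟩ : ∃ n, k = n + 3 := ⟨k - 3, by omega⟩
  intro z hz
  have hA : a + 1 / etower (n + 1) + (((n + 3 : ℕ) : ℝ) - 2) / (etower (n + 1) * etower n) =
      a + boundIncrement n := by
    rw [boundIncrement]; push_cast; ring
  change logProd (n + 3) z - (a + 1 / etower (n + 1) + (((n + 3 : ℕ) : ℝ) - 2) /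
    (etower (n + 1) * etower n)) * logProd (n + 2) z ≤ Tfun (n + 3) z
  rw [hA]
  rcases le_or_gt z (etower (n + 3) + 1 / 4) with hsmall | hlarge
  · exact (logProd_sub_nonpos_of_le n ha hz hsmall).trans (Tfun_nonneg _ _)
  · exact Tfun_lower_bound_of_lt n ha hind hlarge
end
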